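/- arXiv:1711.10509 — 2 statements merged into one kernel-verified Lean document; each statement's English description precedes it below -/
import Mathlib

section
/- Let k ≥ 1. Then ∑_{i=1}^{k} x_1^{2^{i−1}}·G_{2^k−2^{i−1}} = x_1^{2^k} in F₂[x_1,…,x_k]. -/
/-!
Put `φ(u) = ∑_{e<K} u^{2^e}`. In characteristic 2 the Frobenius gives `φ(u)² = φ(u²)`, hence
`φ(u) (1 + φ(u)) = u + u^{2^K}`. For `m < 2^K`, `G_m` is the coefficient of `T^m` in
`P = ∏_j (1 + φ(x_j T))`, so the left-hand side plus the missing term `x_1^{2^k} G_0` is the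
coefficient of `T^{2^k}` in `φ(x_1 T) P = (x_1 T + (x_1 T)^{2^K}) ∏_{j ≠ 1} (1 + φ(x_j T))`.
For `K > k` this is `x_1` times the coefficient of `T^{2^k - 1}` in a product of `k - 1` factors,
which vanishes: binary digit sums are subadditive (Legendre's formula), so a sum of `k - 1`
powers of two has digit sum at most `k - 1`, whereas `2^k - 1` has digit sum `k`.
-/

open MvPolynomial

/-- `Vdm k t` is the determinant of the `k × k` matrix whose `(i, j)` entry is `xᵢ ^ t j`,
in `F₂[x₁, …, x_k]`. -/
noncomputable def Vdm (k : ℕ) (t : Fin k → ℕ) : MvPolynomial (Fin k) (ZMod 2) :=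
  Matrix.det (Matrix.of fun i j : Fin k => (X i : MvPolynomial (Fin k) (ZMod 2)) ^ t j)

/-- `D k = V(2^0, 2^1, …, 2^(k-1))`. -/
noncomputable def D (k : ℕ) : MvPolynomial (Fin k) (ZMod 2) :=
  Vdm k fun j => 2 ^ (j : ℕ)

/-- `N k ℓ j` is the Vandermonde determinant whose exponent tuple lists the 2-powers
`2^0, …, 2^(k-1)` with `2^j` omitted, followed by `2^ℓ`. -/
noncomputable def N (k ℓ j : ℕ) : MvPolynomial (Fin k) (ZMod 2) :=
  Vdm k fun i =>
    if (i : ℕ) + 1 < k then (if (i : ℕ) < j then 2 ^ (i : ℕ) else 2 ^ ((i : ℕ) + 1))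
    else 2 ^ ℓ

/- `G k m` is the sum of all monomials of total degree `m` in `x₁, …, x_k` in which
every nonzero exponent is a power of 2. -/
open Classical in
noncomputable def G (k m : ℕ) : MvPolynomial (Fin k) (ZMod 2) :=
  ∑ d : Fin k → Fin (m + 1),
    if (∑ i, (d i : ℕ)) = m ∧ ∀ i, (d i : ℕ) ≠ 0 → ∃ e, (d i : ℕ) = 2 ^ e then
      ∏ i, (X i : MvPolynomial (Fin k) (ZMod 2)) ^ (d i : ℕ)
    else 0

namespace Nat

theorem digit_sum_add_le (p : ℕ) [Fact p.Prime] (a b : ℕ) :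
    (p.digits (a + b)).sum ≤ (p.digits a).sum + (p.digits b).sum := by
  have hval : padicValNat p a ! + padicValNat p b ! ≤ padicValNat p (a + b)! := by
    rw [← padicValNat.mul (factorial_ne_zero a) (factorial_ne_zero b)]
    exact (padicValNat_dvd_iff_le (factorial_ne_zero _)).mp
      (pow_padicValNat_dvd.trans (factorial_mul_factorial_dvd_factorial_add a b))
  have hmul := Nat.mul_le_mul_left (p - 1) hval
  rw [mul_add, sub_one_mul_padicValNat_factorial, sub_one_mul_padicValNat_factorial,
    sub_one_mul_padicValNat_factorial] at hmul
  have := digit_sum_le p a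
  have := digit_sum_le p b
  have := digit_sum_le p (a + b)
  omega

theorem digit_sum_base_pow {b : ℕ} (hb : 1 < b) (e : ℕ) : (b.digits (b ^ e)).sum = 1 := by
  rw [← mul_one (b ^ e), digits_base_pow_mul hb one_pos, List.sum_append, List.sum_replicate,
    digits_of_lt b 1 one_ne_zero hb]
  simp

theorem digit_sum_base_pow_sub_one {b : ℕ} (hb : 1 < b) (n : ℕ) :
    (b.digits (b ^ n - 1)).sum = n * (b - 1) := by
  induction n with
  | zero => simp
  | succ n ih =>
    have h : b ^ (n + 1) - 1 = (b - 1) + b * (b ^ n - 1) := by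
      have hpos := one_le_pow n b (by omega)
      have : b ≤ b * b ^ n := Nat.le_mul_of_pos_right b hpos
      rw [pow_succ, Nat.mul_sub, mul_one, mul_comm]
      omega
    rw [h, digits_add b hb _ _ (by omega) (Or.inl (by omega)), List.sum_cons, ih]
    ring

end Nat

open Finset

lemma le_card_of_sum_eq_two_pow_sub_one {ι : Type*} [Fintype ι] {n : ℕ} {d : ι → ℕ}
    (hd : ∀ j, d j = 0 ∨ ∃ e, 2 ^ e = d j) (hsum : ∑ j, d j = 2 ^ n - 1) :
    n ≤ Fintype.card ι :=
  calc n = (Nat.digits 2 (∑ j, d j)).sum := by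
        simp [hsum, Nat.digit_sum_base_pow_sub_one one_lt_two]
    _ ≤ ∑ j, (Nat.digits 2 (d j)).sum :=
      le_sum_of_subadditive (fun a => (Nat.digits 2 a).sum) (by simp) (Nat.digit_sum_add_le 2) _ _
    _ ≤ ∑ _j : ι, 1 := sum_le_sum fun j _ => by
      obtain h | ⟨e, h⟩ := hd j
      · simp [h]
      · rw [← h, Nat.digit_sum_base_pow one_lt_two]
    _ = Fintype.card ι := by simp

def zeroOrTwoPow (K : ℕ) : Finset ℕ := insert 0 ((range K).image (2 ^ ·))

lemma mem_zeroOrTwoPow {K a : ℕ} : a ∈ zeroOrTwoPow K ↔ a = 0 ∨ ∃ e < K, 2 ^ e = a := by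
  simp [zeroOrTwoPow]

lemma sum_zeroOrTwoPow_pow {A : Type*} [CommSemiring A] (K : ℕ) (u : A) :
    ∑ a ∈ zeroOrTwoPow K, u ^ a = 1 + ∑ e ∈ range K, u ^ 2 ^ e := by
  rw [zeroOrTwoPow, sum_insert (by simp), pow_zero,
    sum_image fun a _ b _ h => Nat.pow_right_injective le_rfl h]

lemma sum_pow_two_pow_mul_one_add {A : Type*} [CommRing A] [CharP A 2] (K : ℕ) (u : A) :
    (∑ e ∈ range K, u ^ 2 ^ e) * (1 + ∑ e ∈ range K, u ^ 2 ^ e) = u + u ^ 2 ^ K := by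
  induction K with
  | zero => simp [CharTwo.add_self_eq_zero]
  | succ K ih =>
    rw [sum_range_succ]
    linear_combination ih +
      ((∑ e ∈ range K, u ^ 2 ^ e) * u ^ 2 ^ K + u ^ 2 ^ K) * CharTwo.two_eq_zero (R := A)

section GeneratingPolynomial

variable {ι A : Type*} [Fintype ι]

noncomputable def zeroOrTwoPowGF [CommSemiring A] (K : ℕ) (y : ι → A) : Polynomial A :=
  ∏ j, ∑ a ∈ zeroOrTwoPow K, (Polynomial.C (y j) * Polynomial.X) ^ a

omit [Fintype ι] in
lemma coeff_C_mul_X_pow_mul [CommSemiring A] (c : A) (p : Polynomial A) (a n : ℕ) :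
    ((Polynomial.C c * Polynomial.X) ^ a * p).coeff n =
      if a ≤ n then c ^ a * p.coeff (n - a) else 0 := by
  rw [mul_pow, ← Polynomial.C_pow, mul_assoc, Polynomial.coeff_C_mul,
    Polynomial.coeff_X_pow_mul', mul_ite, mul_zero]

variable [DecidableEq ι]

lemma coeff_zeroOrTwoPowGF [CommSemiring A] (K : ℕ) (y : ι → A) (m : ℕ) :
    (zeroOrTwoPowGF K y).coeff m =
      ∑ d ∈ Fintype.piFinset (fun _ => zeroOrTwoPow K) with ∑ j, d j = m, ∏ j, y j ^ d j := by
  simp_rw [zeroOrTwoPowGF, prod_univ_sum, mul_pow, prod_mul_distrib, ← Polynomial.C_pow,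
    ← map_prod, prod_pow_eq_pow_sum, Polynomial.finsetSum_coeff, Polynomial.coeff_C_mul_X_pow,
    sum_filter, eq_comm]

lemma coeff_zeroOrTwoPowGF_two_pow_sub_one [CommSemiring A] (K : ℕ) (y : ι → A) {n : ℕ}
    (hn : Fintype.card ι < n) : (zeroOrTwoPowGF K y).coeff (2 ^ n - 1) = 0 := by
  rw [coeff_zeroOrTwoPowGF, sum_eq_zero]
  intro d hd
  obtain ⟨hdS, hsum⟩ := mem_filter.mp hd
  have := le_card_of_sum_eq_two_pow_sub_one (fun j => ?_) hsum
  · omega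
  · exact (mem_zeroOrTwoPow.mp (Fintype.mem_piFinset.mp hdS j)).imp_right
      fun ⟨e, _, he⟩ => ⟨e, he⟩

lemma coeff_two_pow_card_sum_mul_zeroOrTwoPowGF [CommRing A] [CharP A 2] {K : ℕ}
    (hK : Fintype.card ι < K) (y : ι → A) (z : ι) :
    ((∑ e ∈ range K, (Polynomial.C (y z) * Polynomial.X) ^ 2 ^ e) *
      zeroOrTwoPowGF K y).coeff (2 ^ Fintype.card ι) = 0 := by
  set c := Fintype.card ι
  have hc : Fintype.card {j // j ≠ z} < c := by
    have : 0 < c := Fintype.card_pos_iff.mpr ⟨z⟩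
    simp only [Fintype.card_subtype_compl, Fintype.card_unique]
    omega
  have hK' : ¬ 2 ^ K ≤ 2 ^ c := not_le.mpr (Nat.pow_lt_pow_right one_lt_two hK)
  rw [zeroOrTwoPowGF, Fintype.prod_eq_mul_prod_subtype_ne _ z, ← mul_assoc,
    sum_zeroOrTwoPow_pow, sum_pow_two_pow_mul_one_add, add_mul, Polynomial.coeff_add,
    ← pow_one (Polynomial.C (y z) * Polynomial.X), ← pow_mul, one_mul,
    coeff_C_mul_X_pow_mul, coeff_C_mul_X_pow_mul, if_pos c.one_le_two_pow, if_neg hK', add_zero,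
    show ∏ i : {j // j ≠ z}, _ = zeroOrTwoPowGF K (fun i : {j // j ≠ z} => y i) from rfl,
    coeff_zeroOrTwoPowGF_two_pow_sub_one _ _ hc, mul_zero]

end GeneratingPolynomial

lemma G_eq_coeff_zeroOrTwoPowGF {k m K : ℕ} (hm : m < 2 ^ K) :
    G k m = (zeroOrTwoPowGF K (X : Fin k → MvPolynomial (Fin k) (ZMod 2))).coeff m := by
  classical
  rw [coeff_zeroOrTwoPowGF, G, ← sum_filter]
  have hle : ∀ (d : Fin k → ℕ) i, ∑ j, d j = m → d i ≤ m := fun d i h =>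
    h ▸ single_le_sum (fun j _ => Nat.zero_le (d j)) (mem_univ i)
  refine sum_nbij' (fun (d : Fin k → Fin (m + 1)) i => (d i : ℕ))
    (fun (d : Fin k → ℕ) i => Fin.ofNat (m + 1) (d i)) ?_ ?_ ?_ ?_ (fun _ _ => rfl)
  · simp only [mem_filter, mem_univ, true_and, Fintype.mem_piFinset, mem_zeroOrTwoPow]
    rintro d ⟨hsum, hpow⟩
    refine ⟨fun i => ?_, hsum⟩
    by_cases h0 : (d i : ℕ) = 0
    · exact Or.inl h0
    · obtain ⟨e, he⟩ := hpow i h0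
      refine Or.inr ⟨e, ?_, he.symm⟩
      have := hle (fun j => d j) i hsum
      exact (Nat.pow_lt_pow_iff_right one_lt_two).mp (he ▸ this.trans_lt hm)
  · simp only [mem_filter, mem_univ, true_and, Fintype.mem_piFinset, mem_zeroOrTwoPow,
      Fin.val_ofNat]
    rintro d ⟨hS, hsum⟩
    have hmod : ∀ i, d i % (m + 1) = d i := fun i =>
      Nat.mod_eq_of_lt (Nat.lt_succ_of_le (hle d i hsum))
    simp only [hmod]
    exact ⟨hsum, fun i h0 => ((hS i).resolve_left h0).imp fun e he => he.2.symm⟩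
  · intro d _
    ext i
    simp
  · simp only [mem_filter, Fintype.mem_piFinset]
    rintro d ⟨-, hsum⟩
    ext i
    simp [Nat.mod_eq_of_lt (Nat.lt_succ_of_le (hle d i hsum))]

lemma G_zero (k : ℕ) : G k 0 = 1 := by
  simp [G]

theorem stmt9 (k : ℕ) (hk : 1 ≤ k) :
    ∑ i ∈ Finset.range k,
        (X (⟨0, hk⟩ : Fin k) : MvPolynomial (Fin k) (ZMod 2)) ^ (2 ^ i) * G k (2 ^ k - 2 ^ i) =
      X (⟨0, hk⟩ : Fin k) ^ (2 ^ k) := by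
  set z : Fin k := ⟨0, hk⟩
  have hvanish := coeff_two_pow_card_sum_mul_zeroOrTwoPowGF (K := k + 1) (by simp)
    (X : Fin k → MvPolynomial (Fin k) (ZMod 2)) z
  have hterm : ∀ i ≤ k, ((Polynomial.C (X z) * Polynomial.X) ^ 2 ^ i *
      zeroOrTwoPowGF (k + 1) X).coeff (2 ^ k) = X z ^ 2 ^ i * G k (2 ^ k - 2 ^ i) := by
    intro i hi
    rw [coeff_C_mul_X_pow_mul, if_pos (Nat.pow_le_pow_right two_pos hi),
      G_eq_coeff_zeroOrTwoPowGF (K := k + 1)]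
    exact (Nat.sub_le _ _).trans_lt (Nat.pow_lt_pow_right one_lt_two k.lt_add_one)
  rw [Fintype.card_fin, sum_mul, Polynomial.finsetSum_coeff, sum_range_succ,
    sum_congr rfl fun i hi => hterm i (mem_range.mp hi).le, hterm k le_rfl, Nat.sub_self,
    G_zero, mul_one] at hvanish
  exact CharTwo.add_eq_zero.mp hvanish
end

section
/- Let k ≥ 2 and 0 ≤ j ≤ k−1. Then N(k+2,j)·D⁶ = N(k,j)·N(k,k−2)⁴·D² + N(k,j)·N(k,k−1)⁶ + N(k,j−1)²·N(k,k−1)⁴·D + N(k,j−2)⁴·D³ in F₂[x_1,…,x_k], where N(k,j−1) is interpreted as 0 when j = 0 and N(k,j−2) as 0 when j ≤ 1. (Equivalently, in terms of the quotient polynomials p_{ℓ,j} = N(ℓ,j)/D and Dickson invariants c_j = p_{k,j}: p_{k+2,j} = c_j·c_{k−2}⁴ + c_j·c_{k−1}⁶ + c_{j−1}²·c_{k−1}⁴ + c_{j−2}⁴.) -/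
open MvPolynomial

/-!
Let `V = (xᵢ ^ 2 ^ c)` be the Moore matrix, so `D = det V`. Cramer's rule gives
`D * xᵢ ^ 2 ^ ℓ = ∑_c N(ℓ, c) * xᵢ ^ 2 ^ c` for every `i`, and since `D ≠ 0` (the
diagonal monomial `∏ xᵢ ^ 2 ^ i` occurs in it exactly once) the coefficients in such
relations are unique.
Squaring the relation for `ℓ = k` twice (squaring is additive in characteristic 2) and each
time eliminating `x ^ 2 ^ k` by the same relation expresses `D ^ 7 * x ^ 2 ^ (k + 2)` in the
`x ^ 2 ^ c`; comparing with `D ^ 6` times the relation for `ℓ = k + 2` gives the identity.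
-/

open Finset Matrix

section Frobenius

variable {R : Type*} [CommRing R] [CharP R 2]

/-- If `d * x ^ 2 ^ k = ∑ c < k, n c * x ^ 2 ^ c` and `e * x ^ 2 ^ ℓ = ∑ c < k, a c * x ^ 2 ^ c`,
these are the coefficients of `d * e ^ 2 * x ^ 2 ^ (ℓ + 1)`: square the second relation, shift
the indices up by one and eliminate the top term `x ^ 2 ^ k` with the first. -/
def frobCoeffs (k : ℕ) (d : R) (n a : ℕ → R) (c : ℕ) : R :=
  d * (if 1 ≤ c then a (c - 1) ^ 2 else 0) + a (k - 1) ^ 2 * n c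

theorem sum_frobCoeffs_mul_pow {k ℓ : ℕ} (hk : 1 ≤ k) {x d e : R} {n a : ℕ → R}
    (hn : ∑ c ∈ range k, n c * x ^ 2 ^ c = d * x ^ 2 ^ k)
    (ha : ∑ c ∈ range k, a c * x ^ 2 ^ c = e * x ^ 2 ^ ℓ) :
    ∑ c ∈ range k, frobCoeffs k d n a c * x ^ 2 ^ c = d * e ^ 2 * x ^ 2 ^ (ℓ + 1) := by
  set b : ℕ → R := fun c => if 1 ≤ c then a (c - 1) ^ 2 else 0
  have hsq : ∑ c ∈ range k, b c * x ^ 2 ^ c + a (k - 1) ^ 2 * x ^ 2 ^ k =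
      e ^ 2 * x ^ 2 ^ (ℓ + 1) := by
    have hshift := (sum_range_succ' (fun c => b c * x ^ 2 ^ c) k).symm.trans
      (sum_range_succ (fun c => b c * x ^ 2 ^ c) k)
    simp only [b, if_pos hk, Nat.le_zero, one_ne_zero, if_false, zero_mul, add_zero,
      le_add_iff_nonneg_left, zero_le, if_true, Nat.add_sub_cancel] at hshift
    rw [← hshift, show e ^ 2 * x ^ 2 ^ (ℓ + 1) = (e * x ^ 2 ^ ℓ) ^ 2 by ring, ← ha,
      CharTwo.sum_sq]
    exact sum_congr rfl fun c _ => by ring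
  simp only [frobCoeffs, add_mul, sum_add_distrib, mul_assoc, ← mul_sum, hn]
  rw [← hsq]
  ring

end Frobenius

noncomputable def moore (k : ℕ) : Matrix (Fin k) (Fin k) (MvPolynomial (Fin k) (ZMod 2)) :=
  Matrix.of fun i c => X i ^ 2 ^ (c : ℕ)

theorem det_moore (k : ℕ) : (moore k).det = D k := rfl

theorem N_eq_det_updateCol (k ℓ : ℕ) (c : Fin k) :
    N k ℓ c = ((moore k).updateCol c fun i => X i ^ 2 ^ ℓ).det := by
  obtain ⟨m, rfl⟩ : ∃ m, k = m + 1 := ⟨k - 1, by have := c.isLt; omega⟩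
  have hsign : ∀ σ : Equiv.Perm (Fin (m + 1)),
      ((Equiv.Perm.sign σ : ℤ) : MvPolynomial (Fin (m + 1)) (ZMod 2)) = 1 := fun σ => by
    rcases Int.units_eq_one_or (Equiv.Perm.sign σ) with h | h <;> simp [h, CharTwo.neg_eq]
  -- the columns of `N` are those of the updated matrix, rotated by the cycle `(c c+1 … m)`
  rw [← one_mul (det _), ← hsign (Fin.cycleIcc c (Fin.last m)), ← det_permute', N, Vdm]
  congr 1
  refine Matrix.ext fun i r => ?_
  simp only [of_apply, submatrix_apply, id, updateCol_apply, moore]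
  rcases lt_or_ge r c with hrc | hcr
  · have : (r : ℕ) < c := hrc
    simp [Fin.cycleIcc_of_lt hrc, hrc.ne, this, show (r : ℕ) + 1 < m + 1 by omega]
  rcases (Fin.le_last r).lt_or_eq with hr | rfl
  · have : (r : ℕ) < m := hr
    simp [Fin.cycleIcc_of_ge_of_lt hcr hr, this, Fin.val_add_one_of_lt hr, not_lt.2 hcr,
      (hcr.trans_lt (Fin.lt_add_one_iff.2 hr)).ne']
  · simp [Fin.cycleIcc_of_last (Fin.le_last c)]

theorem moore_mulVec_N (k ℓ : ℕ) :
    moore k *ᵥ (fun c => N k ℓ c) = D k • fun i => X i ^ 2 ^ ℓ := by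
  rw [← det_moore, ← mulVec_cramer]
  congr 1
  funext c
  rw [cramer_apply, N_eq_det_updateCol]

theorem coeff_Vdm {k : ℕ} {t : Fin k → ℕ} (ht : Function.Injective t) :
    coeff (∑ c, Finsupp.single c (t c)) (Vdm k t) = 1 := by
  have hterm : ∀ σ : Equiv.Perm (Fin k),
      ∏ c, (X (σ c) : MvPolynomial (Fin k) (ZMod 2)) ^ t c =
        monomial (∑ c, Finsupp.single (σ c) (t c)) 1 := fun σ => by
    simp only [X_pow_eq_monomial, monomial_sum_one]
  rw [Vdm, det_apply, coeff_sum, sum_eq_single 1]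
  · simpa using congrArg (coeff (∑ c, Finsupp.single c (t c))) (hterm 1)
  · intro σ _ hσ
    obtain ⟨c, hc⟩ : ∃ c, σ c ≠ c := by
      by_contra! h
      exact hσ (Equiv.ext h)
    have hne : ∑ c, Finsupp.single (σ c) (t c) ≠ ∑ c, Finsupp.single c (t c) := fun h => by
      have := DFunLike.congr_fun h (σ c)
      simp [Finsupp.finsetSum_apply, Finsupp.single_apply, σ.injective.eq_iff] at this
      exact hc (ht this).symm
    simp [hterm, coeff_monomial, hne]
  · simp

theorem D_ne_zero (k : ℕ) : D k ≠ 0 := by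
  intro h
  have := coeff_Vdm (k := k) (t := fun c => 2 ^ (c : ℕ))
    fun a b hab => Fin.ext (Nat.pow_right_injective le_rfl hab)
  rw [show Vdm k _ = D k from rfl, h] at this
  simp at this

theorem moore_mulVec_injective (k : ℕ) : Function.Injective (moore k *ᵥ ·) := by
  intro a b hab
  rw [← sub_eq_zero]
  exact eq_zero_of_mulVec_eq_zero (det_moore k ▸ D_ne_zero k)
    (by rw [mulVec_sub]; exact sub_eq_zero.mpr hab)

theorem mulVec_moore_apply (k : ℕ) (a : ℕ → MvPolynomial (Fin k) (ZMod 2)) (i : Fin k) :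
    (moore k *ᵥ fun c => a c) i = ∑ c ∈ range k, a c * X i ^ 2 ^ c := by
  simp only [mulVec, dotProduct, moore, of_apply, mul_comm (X i ^ _)]
  exact Fin.sum_univ_eq_sum_range (fun c => a c * X i ^ 2 ^ c) k

theorem sum_N_mul_pow (k ℓ : ℕ) (i : Fin k) :
    ∑ c ∈ range k, N k ℓ c * X i ^ 2 ^ c = D k * X i ^ 2 ^ ℓ := by
  rw [← mulVec_moore_apply, moore_mulVec_N, Pi.smul_apply, smul_eq_mul]

theorem eq_of_sum_mul_X_pow_eq {k : ℕ} {a b : ℕ → MvPolynomial (Fin k) (ZMod 2)}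
    (h : ∀ i : Fin k,
      ∑ c ∈ range k, a c * X i ^ 2 ^ c = ∑ c ∈ range k, b c * X i ^ 2 ^ c) :
    ∀ c < k, a c = b c := fun c hc =>
  congrFun (moore_mulVec_injective k (a₁ := fun c => a c) (a₂ := fun c => b c) <|
    funext fun i => by simpa only [mulVec_moore_apply] using h i) ⟨c, hc⟩

theorem stmt17 (k j : ℕ) (hk : 2 ≤ k) (hj : j ≤ k - 1) :
    N k (k + 2) j * D k ^ 6 =
      N k k j * N k k (k - 2) ^ 4 * D k ^ 2 +
        N k k j * N k k (k - 1) ^ 6 +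
        (if 1 ≤ j then N k k (j - 1) ^ 2 * N k k (k - 1) ^ 4 * D k else 0) +
        (if 2 ≤ j then N k k (j - 2) ^ 4 * D k ^ 3 else 0) := by
  set n : ℕ → MvPolynomial (Fin k) (ZMod 2) := fun c => N k k c
  have hcoeff : ∀ c < k, frobCoeffs k (D k) n (frobCoeffs k (D k) n n) c =
      D k ^ 6 * N k (k + 2) c := by
    refine eq_of_sum_mul_X_pow_eq fun i => ?_
    have hn := sum_N_mul_pow k k i
    rw [sum_frobCoeffs_mul_pow (by omega) hn (sum_frobCoeffs_mul_pow (by omega) hn hn)]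
    simp only [mul_assoc, ← mul_sum, sum_N_mul_pow]
    ring
  rw [mul_comm, ← hcoeff j (by omega)]
  obtain ⟨m, rfl⟩ : ∃ m, k = m + 2 := ⟨k - 2, by omega⟩
  rcases j with _ | _ | j <;> simp [frobCoeffs, n, CharTwo.add_sq] <;> ring
end
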